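/- arXiv:1811.08828 — 4 statements merged into one kernel-verified Lean document; each statement's English description precedes it below -/
import Mathlib

section
/- For a locally injective holomorphic function f on a domain in ℂ, the classical Schwarzian derivative satisfies S(f) = 2B(|dz|², f*|dz|²), i.e. f''' / f' - (3/2)(f''/f')² = 2(η_{zz} - η_z²) where η = ln|f'| = (1/2)(log f' + conj(log f')). -/
/-!
Near a point where `f' ≠ 0`, `ln |f'|` is the real part of a holomorphic branch of `log f'`,
and for holomorphic `h` the Wirtinger derivative of `Re h` is `h' / 2`. Hence
`η_z = f'' / (2 f')`, which is itself holomorphic, so `η_zz = (1/2) (f''/f')'` and the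
identity is algebra.
-/

/-- The Wirtinger derivative `∂/∂z = (1/2)(∂/∂x - i ∂/∂y)` of a map `ℂ → ℂ`. -/
noncomputable def wderiv (g : ℂ → ℂ) (z : ℂ) : ℂ :=
  (fderiv ℝ g z 1 - Complex.I * fderiv ℝ g z Complex.I) / 2

/-- The classical Schwarzian derivative `S(f) = (f''/f')' - (1/2)(f''/f')²`. -/
noncomputable def schwarzianDeriv (f : ℂ → ℂ) (z : ℂ) : ℂ :=
  deriv (fun w => deriv (deriv f) w / deriv f w) z
    - (1 / 2) * (deriv (deriv f) z / deriv f z) ^ 2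

open Topology

theorem Filter.EventuallyEq.wderiv_eq {g₁ g₂ : ℂ → ℂ} {z : ℂ} (h : g₁ =ᶠ[𝓝 z] g₂) :
    wderiv g₁ z = wderiv g₂ z := by
  rw [wderiv, wderiv, h.fderiv_eq]

theorem HasDerivAt.wderiv_eq {h : ℂ → ℂ} {h' z : ℂ} (hh : HasDerivAt h h' z) :
    wderiv h z = h' := by
  rw [wderiv, (hh.hasFDerivAt.restrictScalars ℝ).fderiv]
  simp only [ContinuousLinearMap.coe_restrictScalars', ContinuousLinearMap.toSpanSingleton_apply,
    smul_eq_mul]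
  linear_combination (-h' / 2) * Complex.I_mul_I

theorem DifferentiableAt.wderiv_eq_deriv {h : ℂ → ℂ} {z : ℂ} (hh : DifferentiableAt ℂ h z) :
    wderiv h z = deriv h z :=
  hh.hasDerivAt.wderiv_eq

theorem HasDerivAt.wderiv_re {h : ℂ → ℂ} {h' z : ℂ} (hh : HasDerivAt h h' z) :
    wderiv (fun w => ((h w).re : ℂ)) z = h' / 2 := by
  have hre : HasFDerivAt (fun w => ((h w).re : ℂ)) _ z := Complex.ofRealCLM.hasFDerivAt.comp z
    (Complex.reCLM.hasFDerivAt.comp z (hh.hasFDerivAt.restrictScalars ℝ))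
  rw [wderiv, hre.fderiv]
  simp [Complex.ext_iff]

theorem HasDerivAt.wderiv_log_norm {g : ℂ → ℂ} {g' z : ℂ} (hg : HasDerivAt g g' z)
    (hz : g z ≠ 0) :
    wderiv (fun w => (Real.log ‖g w‖ : ℂ)) z = g' / (2 * g z) := by
  have hlog : HasDerivAt (fun w => Complex.log (g w / g z) + (Real.log ‖g z‖ : ℂ))
      (g' / g z) z := by
    have := (hg.div_const (g z)).clog (by simp [div_self hz])
    simpa [div_self hz] using this.add_const (Real.log ‖g z‖ : ℂ)
  have hnear : (fun w => (Real.log ‖g w‖ : ℂ)) =ᶠ[𝓝 z]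
      fun w => ((Complex.log (g w / g z) + (Real.log ‖g z‖ : ℂ)).re : ℂ) := by
    filter_upwards [hg.continuousAt.eventually_ne hz] with w hw
    simp [Complex.log_re, Real.log_div (norm_ne_zero_iff.2 hw) (norm_ne_zero_iff.2 hz)]
  rw [hnear.wderiv_eq, hlog.wderiv_re, div_div, mul_comm]

theorem schwarzian_eq_twice_metric_schwarzian_general
    (Ω : Set ℂ) (hΩ : IsOpen Ω)
    (f : ℂ → ℂ) (hf : DifferentiableOn ℂ f Ω)
    (hf' : ∀ z ∈ Ω, deriv f z ≠ 0) :
    ∀ z ∈ Ω,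
      schwarzianDeriv f z =
        2 * (wderiv (wderiv (fun w => (Real.log (‖deriv f w‖) : ℂ))) z
          - (wderiv (fun w => (Real.log (‖deriv f w‖) : ℂ)) z) ^ 2) := by
  intro z hz
  have hf₁ : DifferentiableOn ℂ (deriv f) Ω := hf.deriv hΩ
  have hf₂ : DifferentiableOn ℂ (deriv (deriv f)) Ω := hf₁.deriv hΩ
  have hη : ∀ w ∈ Ω, wderiv (fun w => (Real.log ‖deriv f w‖ : ℂ)) w
      = (1 / 2) * (deriv (deriv f) w / deriv f w) := fun w hw => by
    rw [(hf₁.differentiableAt (hΩ.mem_nhds hw)).hasDerivAt.wderiv_log_norm (hf' w hw)]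
    ring
  have hpreSchwarzian : DifferentiableAt ℂ (fun w => deriv (deriv f) w / deriv f w) z :=
    (hf₂.differentiableAt (hΩ.mem_nhds hz)).div (hf₁.differentiableAt (hΩ.mem_nhds hz)) (hf' z hz)
  have hηη : wderiv (wderiv (fun w => (Real.log ‖deriv f w‖ : ℂ))) z
      = (1 / 2) * deriv (fun w => deriv (deriv f) w / deriv f w) z := by
    rw [Filter.EventuallyEq.wderiv_eq (Filter.eventually_of_mem (hΩ.mem_nhds hz) hη),
      (hpreSchwarzian.const_mul _).wderiv_eq_deriv, deriv_const_mul _ hpreSchwarzian]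
  rw [hηη, hη z hz, schwarzianDeriv]
  ring

/-- For a locally injective holomorphic `f` on a simply connected domain, the
classical Schwarzian satisfies `S(f) = 2 B(|dz|², f*|dz|²) = 2(η_{zz} - η_z²)`
for `η = ln|f'|`. -/
theorem schwarzian_eq_twice_metric_schwarzian
    (Ω : Set ℂ) (hΩ : IsOpen Ω) (hconn : IsPreconnected Ω)
    (hsc : SimplyConnectedSpace Ω)
    (f : ℂ → ℂ) (hf : DifferentiableOn ℂ f Ω)
    (hf' : ∀ z ∈ Ω, deriv f z ≠ 0) :
    ∀ z ∈ Ω,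
      schwarzianDeriv f z =
        2 * (wderiv (wderiv (fun w => (Real.log (‖deriv f w‖) : ℂ))) z
          - (wderiv (fun w => (Real.log (‖deriv f w‖) : ℂ)) z) ^ 2) :=
  schwarzian_eq_twice_metric_schwarzian_general Ω hΩ f hf hf'
end

section
/- Given the first and second fundamental forms I(σ) = (4/σ)|B|² + (1/4)(1-K)²σ + 2(1-K)Re(B) and II(σ) = (4/σ)|B|² - (1/4)(1-K²)σ - 2K·Re(B) of an Epstein surface, the extrinsic Gaussian curvature det(I⁻¹ II) equals (4K + (1-K)² - (16/σ²)|B|²) / ((1-K)² - (16/σ²)|B|²), so the Gaussian curvature K(I) = -1 + det(I⁻¹II) equals 4K / ((1-K)² - (16/σ²)|B|²), provided the denominator is nonzero. -/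
/-!
`Re(B dz²)` is traceless with determinant `-|B|²`, so `det (a·g₀ + b·Re(B dz²)) = a² - b²|B|²`.
Writing `D = (1-K)² - 16|B|²/σ²`, this gives `det I = (σ/4)² D²` and
`det II = (σ/4)² D (D + 4K)`, whence `det(I⁻¹ II) = (D + 4K)/D = 1 + 4K/D`.
-/

/-- The symmetric 2×2 matrix of the real part of the quadratic differential
`B dz²` in the coordinates `(x,y)`, `z = x + iy`:
`Re(B dz²) = Re B (dx² - dy²) - 2 Im B dx dy`. -/
def reQuadDiff (B : ℂ) : Matrix (Fin 2) (Fin 2) ℝ :=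
  !![B.re, -B.im; -B.im, -B.re]

theorem Matrix.det_nonsing_inv_mul {n 𝕜 : Type*} [Fintype n] [DecidableEq n] [Field 𝕜]
    (A M : Matrix n n 𝕜) : (A⁻¹ * M).det = M.det / A.det := by
  rw [Matrix.det_mul, Matrix.det_nonsing_inv, Ring.inverse_eq_inv, inv_mul_eq_div]

theorem det_smul_one_add_smul_reQuadDiff (a b : ℝ) (B : ℂ) :
    (a • (1 : Matrix (Fin 2) (Fin 2) ℝ) + b • reQuadDiff B).det
      = a ^ 2 - b ^ 2 * Complex.normSq B := by
  simp only [reQuadDiff, Matrix.smul_of, Matrix.smul_cons, smul_eq_mul, mul_neg, Matrix.smul_empty,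
    Matrix.det_fin_two, Matrix.add_apply, Matrix.smul_apply, Matrix.one_apply_eq, mul_one,
    Matrix.of_apply, Matrix.cons_val', Matrix.cons_val_zero, Matrix.cons_val_fin_one,
    Matrix.cons_val_one, ne_eq, zero_ne_one, not_false_eq_true, Matrix.one_apply_ne, mul_zero,
    zero_add, one_ne_zero, neg_mul, neg_neg, Complex.normSq_apply]
  ring

/-- Pointwise extrinsic curvature identity for Epstein surfaces: with
`I = ((4/σ)|B|² + (1/4)(1-K)²σ)·g₀ + 2(1-K) Re(B dz²)` and
`II = ((4/σ)|B|² - (1/4)(1-K²)σ)·g₀ - 2K Re(B dz²)`, one has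
`det(I⁻¹ II) = (4K + (1-K)² - (16/σ²)|B|²)/((1-K)² - (16/σ²)|B|²)`, hence
`K(I) = -1 + det(I⁻¹II) = 4K/((1-K)² - (16/σ²)|B|²)`. -/
theorem epstein_gauss_curvature_identity (σ K : ℝ) (B : ℂ) (hσ : 0 < σ)
    (hnd : (1 - K) ^ 2 * σ ^ 2 ≠ 16 * Complex.normSq B)
    (I I2 : Matrix (Fin 2) (Fin 2) ℝ)
    (hI : I = ((4 / σ) * Complex.normSq B + (1 / 4) * (1 - K) ^ 2 * σ)
        • (1 : Matrix (Fin 2) (Fin 2) ℝ) + (2 * (1 - K)) • reQuadDiff B)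
    (hII : I2 = ((4 / σ) * Complex.normSq B - (1 / 4) * (1 - K ^ 2) * σ)
        • (1 : Matrix (Fin 2) (Fin 2) ℝ) - (2 * K) • reQuadDiff B) :
    (I⁻¹ * I2).det
        = (4 * K + (1 - K) ^ 2 - 16 * Complex.normSq B / σ ^ 2)
          / ((1 - K) ^ 2 - 16 * Complex.normSq B / σ ^ 2) ∧
    -1 + (I⁻¹ * I2).det
        = 4 * K / ((1 - K) ^ 2 - 16 * Complex.normSq B / σ ^ 2) := by
  set D := (1 - K) ^ 2 - 16 * Complex.normSq B / σ ^ 2 with hD_def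
  have hσ0 : σ ≠ 0 := hσ.ne'
  have hD : D ≠ 0 := by
    rw [hD_def, sub_ne_zero, ne_eq, eq_div_iff (pow_ne_zero 2 hσ0)]
    exact hnd
  have hdetI : I.det = (σ / 4) ^ 2 * D ^ 2 := by
    rw [hI, det_smul_one_add_smul_reQuadDiff, hD_def]
    field_simp
    ring
  have hdetII : I2.det = (σ / 4) ^ 2 * (D * (D + 4 * K)) := by
    rw [hII, sub_eq_add_neg, ← neg_smul, det_smul_one_add_smul_reQuadDiff, hD_def]
    field_simp
    ring
  have hratio : (I⁻¹ * I2).det = (4 * K + D) / D := by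
    rw [Matrix.det_nonsing_inv_mul, hdetI, hdetII]
    field_simp
    ring
  constructor
  · rw [hratio, hD_def]
    ring
  · rw [hratio]
    field_simp
    ring
end

section
/- With I(σ) and II(σ) as for an Epstein surface, the mean curvature H = (1/2)tr(I⁻¹ II) equals (K² - 1 - (16/σ²)|B|²) / ((K-1)² - (16/σ²)|B|²), provided the denominator is nonzero. -/
namespace Matrix

variable {n k : Type*} [Fintype n] [DecidableEq n]

theorem smul_one_add_smul_mul_smul_one_sub_smul [CommRing k] {R : Matrix n n k} {r : k}
    (hR : R * R = r • 1) (a s : k) :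
    (a • 1 + s • R) * (a • 1 - s • R) = (a ^ 2 - s ^ 2 * r) • (1 : Matrix n n k) := by
  simp only [add_mul, mul_sub, one_mul, mul_one, smul_mul_assoc, mul_smul_comm, hR, smul_smul]
  module

variable [Field k] {R : Matrix n n k} {r : k}

theorem inv_smul_one_add_smul (hR : R * R = r • 1) {a s : k} (h : a ^ 2 - s ^ 2 * r ≠ 0) :
    (a • 1 + s • R)⁻¹ = (a ^ 2 - s ^ 2 * r)⁻¹ • (a • 1 - s • R) := by
  refine inv_eq_right_inv ?_
  rw [mul_smul_comm, smul_one_add_smul_mul_smul_one_sub_smul hR, smul_smul, inv_mul_cancel₀ h,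
    one_smul]

theorem trace_inv_smul_one_add_smul_mul_smul_one_add_smul (hR : R * R = r • 1)
    (htr : R.trace = 0) {a s : k} (h : a ^ 2 - s ^ 2 * r ≠ 0) (c t : k) :
    ((a • 1 + s • R)⁻¹ * (c • 1 + t • R)).trace
      = Fintype.card n * (a * c - s * t * r) / (a ^ 2 - s ^ 2 * r) := by
  rw [inv_smul_one_add_smul hR h]
  simp only [smul_mul_assoc, mul_smul_comm, sub_mul, mul_add, one_mul, mul_one, hR, smul_smul,
    trace_smul, trace_add, trace_sub, trace_one, htr, smul_eq_mul]
  field_simp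
  ring

end Matrix

theorem reQuadDiff_mul_self (B : ℂ) : reQuadDiff B * reQuadDiff B = Complex.normSq B • 1 := by
  ext i j
  fin_cases i <;> fin_cases j <;>
    simp [reQuadDiff, Complex.normSq_apply, Matrix.mul_apply, Fin.sum_univ_two] <;> ring

theorem trace_reQuadDiff (B : ℂ) : (reQuadDiff B).trace = 0 := by
  simp [reQuadDiff, Matrix.trace_fin_two]

/-- Pointwise mean curvature identity for Epstein surfaces: with
`I = ((4/σ)|B|² + (1/4)(1-K)²σ)·g₀ + 2(1-K) Re(B dz²)` and
`II = ((4/σ)|B|² - (1/4)(1-K²)σ)·g₀ - 2K Re(B dz²)`, one has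
`(1/2)tr(I⁻¹ II) = (K² - 1 - (16/σ²)|B|²)/((K-1)² - (16/σ²)|B|²)`. -/
theorem epstein_mean_curvature_identity (σ K : ℝ) (B : ℂ) (hσ : 0 < σ)
    (hnd : (K - 1) ^ 2 * σ ^ 2 ≠ 16 * Complex.normSq B)
    (I I2 : Matrix (Fin 2) (Fin 2) ℝ)
    (hI : I = ((4 / σ) * Complex.normSq B + (1 / 4) * (1 - K) ^ 2 * σ)
        • (1 : Matrix (Fin 2) (Fin 2) ℝ) + (2 * (1 - K)) • reQuadDiff B)
    (hII : I2 = ((4 / σ) * Complex.normSq B - (1 / 4) * (1 - K ^ 2) * σ)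
        • (1 : Matrix (Fin 2) (Fin 2) ℝ) - (2 * K) • reQuadDiff B) :
    (1 / 2) * (I⁻¹ * I2).trace
      = (K ^ 2 - 1 - 16 * Complex.normSq B / σ ^ 2)
        / ((K - 1) ^ 2 - 16 * Complex.normSq B / σ ^ 2) := by
  have hσ0 : σ ≠ 0 := hσ.ne'
  have hD : 16 * Complex.normSq B - (K - 1) ^ 2 * σ ^ 2 ≠ 0 := sub_ne_zero.mpr hnd.symm
  have hdet : ((4 / σ) * Complex.normSq B + (1 / 4) * (1 - K) ^ 2 * σ) ^ 2
        - (2 * (1 - K)) ^ 2 * Complex.normSq B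
      = ((16 * Complex.normSq B - (K - 1) ^ 2 * σ ^ 2) / (4 * σ)) ^ 2 := by
    field_simp
    ring
  have hnum : ((4 / σ) * Complex.normSq B + (1 / 4) * (1 - K) ^ 2 * σ)
        * ((4 / σ) * Complex.normSq B - (1 / 4) * (1 - K ^ 2) * σ)
        - 2 * (1 - K) * -(2 * K) * Complex.normSq B
      = (16 * Complex.normSq B - (K - 1) ^ 2 * σ ^ 2)
        * (16 * Complex.normSq B - (K ^ 2 - 1) * σ ^ 2) / (16 * σ ^ 2) := by
    field_simp
    ring
  rw [hI, hII, sub_eq_add_neg (_ • 1), ← neg_smul,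
    Matrix.trace_inv_smul_one_add_smul_mul_smul_one_add_smul (reQuadDiff_mul_self B)
      (trace_reQuadDiff B) (hdet ▸ pow_ne_zero 2 (div_ne_zero hD (by positivity))),
    hdet, hnum, Fintype.card_fin]
  field_simp
  ring
end

section
/- If σ solves the k-surface equation 4K(σ) = k((1-K(σ))² - (16/σ²)|B(σ)|²) with -1 < k < 0, and τ = f(k)σ with f(k) = (1-√(1+k))/(1+√(1+k)), then τ solves (2+k)(1+K(τ))² + 2√(1+k)(1-K(τ)²) + 16(2√(1+k) - 2 - k)|B(τ)|²/τ² = 0. -/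
/-! With `s = √(1 + k)` one has `k = s² - 1` and `f(k) = (1 - s)/(1 + s)`. Clearing the
denominators `(1 - s)²` of `K/f` and `|B|²/(f²σ²)`, the scaled expression becomes
`(1 - s²)` times `(1 - s²)(1 + K² - 16|B|²/σ²) + 2K(1 + s²)`, and the second factor is the
`k`-surface equation `4K - k((1 - K)² - 16|B|²/σ²)` rewritten in terms of `s`. -/

theorem scaled_eq_of_k_surface_eq {k s K t f : ℝ} (hs : s ^ 2 = 1 + k) (hs₁ : s ≠ 1)
    (h : 4 * K = k * ((1 - K) ^ 2 - 16 * t))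
    (hf : f = (1 - s) / (1 + s)) :
    (2 + k) * (1 + K / f) ^ 2 + 2 * s * (1 - (K / f) ^ 2)
      + 16 * (2 * s - 2 - k) * (t / f ^ 2) = 0 := by
  have hs₁' : 1 - s ≠ 0 := sub_ne_zero.mpr hs₁.symm
  have hk : k = s ^ 2 - 1 := by linarith
  subst hf hk
  field_simp
  linear_combination (1 + s) * (1 - s) * h

theorem scaled_k_surface_equation_general (k σ b K : ℝ) (hk : k ∈ Set.Ioo (-1 : ℝ) 0)
    (hsol : 4 * K = k * ((1 - K) ^ 2 - 16 * b / σ ^ 2))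
    (f K' b' : ℝ)
    (hf : f = (1 - Real.sqrt (1 + k)) / (1 + Real.sqrt (1 + k)))
    (hK' : K' = K / f) (hb' : b' = b / (f ^ 2 * σ ^ 2)) :
    (2 + k) * (1 + K') ^ 2 + 2 * Real.sqrt (1 + k) * (1 - K' ^ 2)
      + 16 * (2 * Real.sqrt (1 + k) - 2 - k) * b' = 0 := by
  obtain ⟨hk₁, hk₀⟩ := hk
  have hs : Real.sqrt (1 + k) ^ 2 = 1 + k := Real.sq_sqrt (by linarith)
  have hs₁ : Real.sqrt (1 + k) ≠ 1 := fun h ↦ by rw [h] at hs; linarith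
  have hb'' : b' = b / σ ^ 2 / f ^ 2 := by rw [hb', div_div, mul_comm]
  subst hK' hb''
  exact scaled_eq_of_k_surface_eq hs hs₁ (by rwa [← mul_div_assoc]) hf

/-- If `σ` solves the k-surface equation `4K = k((1-K)² - 16|B|²/σ²)` for
`-1 < k < 0`, then the rescaled metric `τ = f(k)σ` with
`f(k) = (1-√(1+k))/(1+√(1+k))` (so `K(τ) = K/f(k)` and
`|B(τ)|²/τ² = |B|²/(f(k)²σ²)`) solves the scaled equation
`(2+k)(1+K(τ))² + 2√(1+k)(1-K(τ)²) + 16(2√(1+k)-2-k)|B(τ)|²/τ² = 0`. -/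
theorem scaled_k_surface_equation (k σ b K : ℝ) (hk : k ∈ Set.Ioo (-1 : ℝ) 0)
    (hσ : 0 < σ) (hb : 0 ≤ b)
    (hsol : 4 * K = k * ((1 - K) ^ 2 - 16 * b / σ ^ 2))
    (f K' b' : ℝ)
    (hf : f = (1 - Real.sqrt (1 + k)) / (1 + Real.sqrt (1 + k)))
    (hK' : K' = K / f) (hb' : b' = b / (f ^ 2 * σ ^ 2)) :
    (2 + k) * (1 + K') ^ 2 + 2 * Real.sqrt (1 + k) * (1 - K' ^ 2)
      + 16 * (2 * Real.sqrt (1 + k) - 2 - k) * b' = 0 :=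
  scaled_k_surface_equation_general k σ b K hk hsol f K' b' hf hK' hb'
end
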